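/- Let k be a nontrivial commutative ring and V = k^n with basis v_1,...,v_n. If n - 1 ≤ r, then the algebra homomorphism Φ_{n,r} : k[W_n] → End_k(V^{⊗r}) induced by the diagonal basis-permuting action of W_n on V^{⊗r} is injective. -/

import Mathlib

noncomputable section

open Equiv

/-- The linear action of a group `G` on the free `k`-module `X → k` of functions,
induced from a `G`-action on `X` by `(g • f) x = f (g⁻¹ • x)`. -/
def actEnd (k : Type) [CommRing k] (G : Type) [Group G] (X : Type) [MulAction G X] :
    G →* Module.End k (X → k) where
  toFun g := LinearMap.funLeft k k fun x => g⁻¹ • x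
  map_one' := by
    ext f x
    simp
  map_mul' g₁ g₂ := by
    ext f x
    simp [mul_smul]

/-- The diagonal (value-permutation) action of the symmetric group `W_n` on
`V^{⊗r}` (`V = k^n`), modelled as the free `k`-module on multi-indices `Fin r → Fin n`;
on basis vectors, `w ⬝ (v_{i_1} ⊗ ⋯ ⊗ v_{i_r}) = v_{w i_1} ⊗ ⋯ ⊗ v_{w i_r}`. -/
def permEnd (k : Type) [CommRing k] (n r : ℕ) :
    Equiv.Perm (Fin n) →* Module.End k ((Fin r → Fin n) → k) :=
  actEnd k (Equiv.Perm (Fin n)) (Fin r → Fin n)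

/-- `Φ_{n,r} : k[W_n] → End_k(V^{⊗r})`. -/
def PhiAlg (k : Type) [CommRing k] (n r : ℕ) :
    MonoidAlgebra k (Equiv.Perm (Fin n)) →ₐ[k] Module.End k ((Fin r → Fin n) → k) :=
  MonoidAlgebra.lift k (Module.End k ((Fin r → Fin n) → k)) (Equiv.Perm (Fin n)) (permEnd k n r)

/-- The restriction of `Φ_{n,r}` to the group algebra of a subgroup `G ≤ W_n`. -/
def PhiSub (k : Type) [CommRing k] (n r : ℕ) (G : Subgroup (Equiv.Perm (Fin n))) :
    MonoidAlgebra k ↥G →ₐ[k] Module.End k ((Fin r → Fin n) → k) :=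
  MonoidAlgebra.lift k (Module.End k ((Fin r → Fin n) → k)) ↥G ((permEnd k n r).comp G.subtype)

/-- `W_{n-1} = {w ∈ W_n : w(n) = n}`, the stabilizer of the last basis vector. -/
def stabLast (n : ℕ) (hn : 0 < n) : Subgroup (Equiv.Perm (Fin n)) :=
  MulAction.stabilizer (Equiv.Perm (Fin n)) (⟨n - 1, Nat.sub_lt hn Nat.one_pos⟩ : Fin n)

/-- `V(Λ)`: the span of the basis tensors whose multi-index has value-type `Λ`
(the value-type of a multi-index `i` is the set-partition `Setoid.ker i` by fibers). -/
def Vpart (k : Type) [CommRing k] (n r : ℕ) (Λ : Setoid (Fin r)) :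
    Submodule k ((Fin r → Fin n) → k) :=
  Submodule.span k {f | ∃ i : Fin r → Fin n, Setoid.ker i = Λ ∧ f = Pi.single i 1}

/-- `V'(Λ')`: the span of the basis tensors `v_{i_1} ⊗ ⋯ ⊗ v_{i_r} ⊗ v_n`
whose multi-index `(i_1, …, i_r, n)` has value-type `Λ'`. -/
def Vpart' (k : Type) [CommRing k] (n r : ℕ) (hn : 0 < n) (Λ' : Setoid (Fin (r + 1))) :
    Submodule k ((Fin (r + 1) → Fin n) → k) :=
  Submodule.span k {f | ∃ i : Fin (r + 1) → Fin n, Setoid.ker i = Λ' ∧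
    i (Fin.last r) = (⟨n - 1, Nat.sub_lt hn Nat.one_pos⟩ : Fin n) ∧ f = Pi.single i 1}

/-- The submodule `V^{⊗r} ⊗ v_n ⊆ V^{⊗(r+1)}`. -/
def lastSub (k : Type) [CommRing k] (n r : ℕ) (hn : 0 < n) :
    Submodule k ((Fin (r + 1) → Fin n) → k) :=
  Submodule.span k {f | ∃ i : Fin (r + 1) → Fin n,
    i (Fin.last r) = (⟨n - 1, Nat.sub_lt hn Nat.one_pos⟩ : Fin n) ∧ f = Pi.single i 1}

/-- The multi-index of the tensor `v_{n-l+1} ⊗ ⋯ ⊗ v_n`. -/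
def baseIdx (n l : ℕ) (h : l ≤ n) : Fin l → Fin n :=
  fun α => ⟨n - l + α.1, by have := α.isLt; omega⟩

/-- `H_n(l)`: the `k[W_n]`-submodule of `V^{⊗l}` generated by `v_{n-l+1} ⊗ ⋯ ⊗ v_n`. -/
def Hmod (k : Type) [CommRing k] (n l : ℕ) (h : l ≤ n) :
    Submodule k ((Fin l → Fin n) → k) :=
  Submodule.span k
    (Set.range fun w : Equiv.Perm (Fin n) => permEnd k n l w (Pi.single (baseIdx n l h) 1))

/-- The multi-index of the tensor `v_{n-m} ⊗ ⋯ ⊗ v_{n-1}` (inside `U = ⟨v_1, …, v_{n-1}⟩`). -/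
def baseIdx' (n m : ℕ) (h : m < n) : Fin m → Fin n :=
  fun α => ⟨n - 1 - m + α.1, by have := α.isLt; omega⟩

/-- `H_{n-1}(m)`: the `k[W_{n-1}]`-submodule of `U^{⊗m}` generated by
`v_{n-m} ⊗ ⋯ ⊗ v_{n-1}`, where `U = ⟨v_1, …, v_{n-1}⟩`. -/
def Hprime (k : Type) [CommRing k] (n m : ℕ) (h : m < n) :
    Submodule k ((Fin m → Fin n) → k) :=
  Submodule.span k
    (Set.range fun w : ↥(stabLast n (by omega)) =>
      permEnd k n m ↑w (Pi.single (baseIdx' n m h) 1))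

/-- The Young subgroup `W_{(n-l,1^l)}` of permutations fixing each of the last `l` points. -/
def fixTop (n l : ℕ) : Subgroup (Equiv.Perm (Fin n)) where
  carrier := {w | ∀ j : Fin n, n - l ≤ (j : ℕ) → w j = j}
  one_mem' := by intro j _; rfl
  mul_mem' := by
    intro a b ha hb j hj
    simp only [Set.mem_setOf_eq] at ha hb
    rw [Equiv.Perm.mul_apply, hb j hj, ha j hj]
  inv_mem' := by
    intro a ha j hj
    simp only [Set.mem_setOf_eq] at ha
    conv_lhs => rw [← ha j hj]
    exact Equiv.symm_apply_apply a j

/-- The index of the consecutive block (with block sizes `lam`) containing position `x`. -/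
def blockIdx (lam : List ℕ) (x : ℕ) : ℕ :=
  ((List.range lam.length).filter fun t => (lam.take (t + 1)).sum ≤ x).length

/-- The Young subgroup `W_λ ≤ W_d`: permutations preserving each consecutive block
of sizes `λ_1, λ_2, …`. -/
def youngSubgroup (d : ℕ) (lam : List ℕ) : Subgroup (Equiv.Perm (Fin d)) where
  carrier := {w | ∀ j : Fin d, blockIdx lam ((w j : Fin d) : ℕ) = blockIdx lam (j : ℕ)}
  one_mem' := by intro j; rfl
  mul_mem' := by
    intro a b ha hb j
    simp only [Set.mem_setOf_eq] at ha hb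
    rw [Equiv.Perm.mul_apply, ha (b j), hb j]
  inv_mem' := by
    intro a ha j
    simp only [Set.mem_setOf_eq] at ha
    conv_rhs => rw [← (Equiv.apply_symm_apply a j : a (a⁻¹ j) = j)]
    exact (ha (a⁻¹ j)).symm

/-- `x_λ = Σ_{w ∈ W_λ} w ∈ k[W_d]`. -/
def xElt (k : Type) [CommRing k] (d : ℕ) (lam : List ℕ) :
    MonoidAlgebra k (Equiv.Perm (Fin d)) :=
  letI := Classical.decPred (· ∈ youngSubgroup d lam)
  ∑ w ∈ Finset.univ.filter (· ∈ youngSubgroup d lam), MonoidAlgebra.single w (1 : k)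

/-- `y_λ = Σ_{w ∈ W_λ} sgn(w) w ∈ k[W_d]`. -/
def yElt (k : Type) [CommRing k] (d : ℕ) (lam : List ℕ) :
    MonoidAlgebra k (Equiv.Perm (Fin d)) :=
  letI := Classical.decPred (· ∈ youngSubgroup d lam)
  ∑ w ∈ Finset.univ.filter (· ∈ youngSubgroup d lam),
    MonoidAlgebra.single w ((Equiv.Perm.sign w : ℤ) : k)

/-- `y_λ = Σ_{w ∈ W_λ ∩ G} sgn(w) w`, as an element of the group algebra of a
subgroup `G ≤ W_d` (for `G = W_{n-1}` and `λ ⊢ n-1` this is the usual `y_λ ∈ k[W_{n-1}]`). -/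
def yEltSub (k : Type) [CommRing k] {d : ℕ} (G : Subgroup (Equiv.Perm (Fin d)))
    (lam : List ℕ) : MonoidAlgebra k ↥G :=
  letI : Fintype ↥G := Fintype.ofFinite ↥G
  letI := Classical.decPred fun w : ↥G => (w : Equiv.Perm (Fin d)) ∈ youngSubgroup d lam
  ∑ w ∈ Finset.univ.filter (fun w : ↥G => (w : Equiv.Perm (Fin d)) ∈ youngSubgroup d lam),
    MonoidAlgebra.single w ((Equiv.Perm.sign (w : Equiv.Perm (Fin d)) : ℤ) : k)

/-- The dominance order on partitions (as lists of parts): `lam ⊵ mu`. -/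
def Dominates (lam mu : List ℕ) : Prop :=
  ∀ t : ℕ, (mu.take t).sum ≤ (lam.take t).sum

/-- The conjugate (transpose) partition: `μᵀ_i = #{j : μ_j ≥ i}`. -/
def conjList (mu : List ℕ) : List ℕ :=
  (List.range mu.headI).map fun i => (mu.filter fun p => i < p).length

/-- `lam` is a partition of `d`: positive parts, in weakly decreasing order, summing to `d`. -/
def IsPartitionList (d : ℕ) (lam : List ℕ) : Prop :=
  (∀ p ∈ lam, 0 < p) ∧ lam.sum = d ∧ lam.Pairwise (· ≥ ·)

/-- The hook partition `α(d,r) = (d-r, 1^r)`. -/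
def hookPartition (d r : ℕ) : List ℕ := (d - r) :: List.replicate r 1

/-- The representation of `k[W_d]` on the permutation module `M^λ`, the free `k`-module
on the left cosets `W_d / W_λ` with `W_d` acting by left translation. -/
def PhiQuot (k : Type) [CommRing k] (d : ℕ) (lam : List ℕ) :
    MonoidAlgebra k (Equiv.Perm (Fin d)) →ₐ[k]
      Module.End k ((Equiv.Perm (Fin d) ⧸ youngSubgroup d lam) → k) :=
  MonoidAlgebra.lift k _ _
    (actEnd k (Equiv.Perm (Fin d)) (Equiv.Perm (Fin d) ⧸ youngSubgroup d lam))

/-- The representation of `k[G]` (for `G ≤ W_d`) on the permutation module on the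
left cosets `G / (G ∩ W_λ)`. -/
def PhiQuotSub (k : Type) [CommRing k] {d : ℕ} (G : Subgroup (Equiv.Perm (Fin d)))
    (lam : List ℕ) :
    MonoidAlgebra k ↥G →ₐ[k]
      Module.End k ((↥G ⧸ Subgroup.comap G.subtype (youngSubgroup d lam)) → k) :=
  MonoidAlgebra.lift k _ _
    (actEnd k ↥G (↥G ⧸ Subgroup.comap G.subtype (youngSubgroup d lam)))

/-- The Stirling number of the second kind `S(r,l)`: the number of set-partitions
of an `r`-element set into exactly `l` nonempty blocks. -/
def stirling (r l : ℕ) : ℕ :=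
  Nat.card {Λ : Setoid (Fin r) // Nat.card (Quotient Λ) = l}

/-!
A permutation agreeing with another one off a single point agrees with it everywhere, so as
`r ≥ n - 1` there is a multi-index `i : Fin r → Fin n` (hitting every value but `n - 1`)
whose `W_n`-orbit is free. For a free orbit `G • x`, the coefficient of `u` in `a ∈ k[G]` is
the `(u • x)`-entry of `Φ(a)(e_x)`, so `Φ(a) = 0` forces `a = 0`.
-/

theorem Equiv.Perm.eq_of_forall_ne_apply_eq {α : Type*} {w u : Equiv.Perm α} (p : α)
    (h : ∀ m, m ≠ p → w m = u m) : w = u := by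
  ext m
  by_cases hm : m = p
  · subst hm
    by_contra hne
    set q := u.symm (w m)
    have huq : u q = w m := u.apply_symm_apply (w m)
    have hq : q ≠ m := fun hqm => hne (by rw [← huq, hqm])
    exact hq (w.injective (by rw [h q hq, huq]))
  · exact h m hm

theorem Equiv.Perm.smul_left_injective_of_forall_ne_mem_range {α β : Type*} {i : β → α}
    (p : α) (hi : ∀ m, m ≠ p → m ∈ Set.range i) :
    Function.Injective fun w : Equiv.Perm α => w • i := by
  intro w u hwu
  refine Equiv.Perm.eq_of_forall_ne_apply_eq p fun m hm => ?_
  obtain ⟨j, rfl⟩ := hi m hm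
  exact congrFun hwu j

section FreeOrbit

variable {k G X : Type} [CommRing k] [Group G] [MulAction G X] [DecidableEq X]

theorem actEnd_apply_single_smul [DecidableEq G] {x : X}
    (hx : Function.Injective (· • x : G → X)) (g u : G) :
    actEnd k G X g (Pi.single x (1 : k)) (u • x) = if g = u then 1 else 0 := by
  change (Pi.single x 1 : X → k) (g⁻¹ • u • x) = _
  rw [Pi.single_apply, smul_smul, ← one_smul G x, smul_smul, mul_one]
  simp only [hx.eq_iff, inv_mul_eq_one]

theorem lift_actEnd_apply_single_smul {x : X} (hx : Function.Injective (· • x : G → X))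
    (a : MonoidAlgebra k G) (u : G) :
    MonoidAlgebra.lift k _ G (actEnd k G X) a (Pi.single x 1) (u • x) = a.coeff u := by
  classical
  rw [MonoidAlgebra.lift_apply, Finsupp.sum, LinearMap.sum_apply, Finset.sum_apply]
  simp [actEnd_apply_single_smul hx, eq_comm]

theorem injective_lift_actEnd_of_injective_smul {x : X}
    (hx : Function.Injective (· • x : G → X)) :
    Function.Injective (MonoidAlgebra.lift k _ G (actEnd k G X)) := by
  rw [injective_iff_map_eq_zero]
  intro a ha
  rw [← MonoidAlgebra.coeff_eq_zero]
  ext u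
  rw [← lift_actEnd_apply_single_smul hx, ha]
  rfl

end FreeOrbit

theorem stmt_11_general (k : Type) [CommRing k] (n r : ℕ) (hn : 0 < n)
    (hr : n - 1 ≤ r) : Function.Injective ⇑(PhiAlg k n r) := by
  let i : Fin r → Fin n := fun j => ⟨min j (n - 1), by omega⟩
  refine injective_lift_actEnd_of_injective_smul (x := i)
    (Equiv.Perm.smul_left_injective_of_forall_ne_mem_range ⟨n - 1, by omega⟩ fun m hm => ?_)
  have hm' : (m : ℕ) < n - 1 := by
    have : (m : ℕ) ≠ n - 1 := fun h => hm (Fin.ext h)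
    omega
  exact ⟨⟨m, by omega⟩, Fin.ext (min_eq_left hm'.le)⟩

/-- If `n - 1 ≤ r`, the representation `Φ_{n,r} : k[W_n] → End_k(V^{⊗r})` is faithful. -/
theorem stmt_11 (k : Type) [CommRing k] [Nontrivial k] (n r : ℕ) (hn : 0 < n)
    (hr : n - 1 ≤ r) : Function.Injective ⇑(PhiAlg k n r) :=
  stmt_11_general k n r hn hr
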